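/- Let z be an involution in S_n with exactly k fixed points. Then ℓ(ι_des(z)) = ℓ(ι_asc(z)) + k(k-1), where ℓ denotes the number of inversions (Coxeter length) in S_{2n}. -/

import Mathlib

namespace GelfandRSK

/-- Schensted insertion of `x` into a single row: replace the first entry greater than `x`,
returning the new row and the bumped entry (if any). -/
def insertRow (r : List ℕ) (x : ℕ) : List ℕ × Option ℕ :=
  match r.findIdx? (fun y => decide (x < y)) with
  | none => (r ++ [x], none)
  | some i => (r.set i x, r[i]?)

/-- Schensted row insertion of `x` into a tableau (list of rows). -/
def rsInsert : List (List ℕ) → ℕ → List (List ℕ)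
  | [], x => [[x]]
  | r :: rest, x =>
    match insertRow r x with
    | (r', none) => r' :: rest
    | (r', some y) => r' :: rsInsert rest y

/-- The (0-indexed) row in which Schensted insertion of `x` adds a new box. -/
def rsBumpRow : List (List ℕ) → ℕ → ℕ
  | [], _ => 0
  | r :: rest, x =>
    match insertRow r x with
    | (_, none) => 0
    | (_, some y) => rsBumpRow rest y + 1

/-- The (0-indexed) column in which Schensted insertion of `x` adds a new box. -/
def rsBumpCol (T : List (List ℕ)) (x : ℕ) : ℕ := (T.getD (rsBumpRow T x) []).length

/-- Add entry `k` at the end of (0-indexed) row `r`. -/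
def addAtRow (T : List (List ℕ)) (r : ℕ) (k : ℕ) : List (List ℕ) :=
  if r < T.length then T.set r (T.getD r [] ++ [k]) else T ++ [[k]]

/-- Add entry `k` at the end of (0-indexed) column `c`. -/
def addAtCol (T : List (List ℕ)) (c : ℕ) (k : ℕ) : List (List ℕ) :=
  addAtRow T (T.findIdx (fun r => decide (r.length ≤ c))) k

/-- The Robinson--Schensted insertion tableau of a word. -/
def PRS (w : List ℕ) : List (List ℕ) := w.foldl rsInsert []

/-- The Robinson--Schensted pair (insertion tableau, recording tableau) of a word. -/
def RSpair (w : List ℕ) : List (List ℕ) × List (List ℕ) :=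
  ((List.range w.length).zip w).foldl (fun pq ix =>
    (rsInsert pq.1 ix.2, addAtRow pq.2 (rsBumpRow pq.1 ix.2) (ix.1 + 1))) ([], [])

/-- The Robinson--Schensted recording tableau of a word. -/
def QRS (w : List ℕ) : List (List ℕ) := (RSpair w).2

/-- The row reading word: read rows left to right, starting with the last row. -/
def rowWord (T : List (List ℕ)) : List ℕ := T.reverse.flatten

/-- The shape of a tableau: the list of its row lengths. -/
def shape (T : List (List ℕ)) : List ℕ := T.map List.length

/-- Columns of the tableau are strictly increasing downwards. -/
def colStrict (T : List (List ℕ)) : Prop :=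
  ∀ i c, i + 1 < T.length → c < (T.getD (i+1) []).length →
    (T.getD i []).getD c 0 < (T.getD (i+1) []).getD c 0

/-- A partially standard tableau: semistandard, of partition shape, with
distinct positive entries (hence rows and columns strictly increasing). -/
def PartiallyStandard (T : List (List ℕ)) : Prop :=
  (∀ r ∈ T, r ≠ []) ∧
  T.Chain' (fun r₁ r₂ => r₂.length ≤ r₁.length) ∧
  (∀ r ∈ T, r.Chain' (· < ·)) ∧
  colStrict T ∧
  T.flatten.Nodup ∧
  (∀ x ∈ T.flatten, 0 < x)

/-- A standard tableau with `n` boxes: partially standard with entries exactly `1, …, n`. -/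
def IsStandardTab (n : ℕ) (T : List (List ℕ)) : Prop :=
  PartiallyStandard T ∧ T.flatten.Perm (List.range' 1 n)

/-- Row Beissinger insertion of a pair `(a, b)` with `a ≤ b`. -/
def rBS (T : List (List ℕ)) (a b : ℕ) : List (List ℕ) :=
  if a = b then addAtRow T 0 a
  else addAtRow (rsInsert T a) (rsBumpRow T a + 1) b

/-- Column Beissinger insertion of a pair `(a, b)` with `a ≤ b`. -/
def cBS (T : List (List ℕ)) (a b : ℕ) : List (List ℕ) :=
  if a = b then addAtCol T 0 a
  else addAtCol (rsInsert T a) (rsBumpCol T a + 1) b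

/-- The function on 0-based indices underlying a permutation of `Fin n`
(identity outside `[0, n)`). -/
def permFn {n : ℕ} (z : Equiv.Perm (Fin n)) : ℕ → ℕ :=
  fun i => if h : i < n then (z ⟨i, h⟩ : ℕ) else i

/-- The one-line word (with 1-based values) of a function on `[0, m)`. -/
def wordFn (w : ℕ → ℕ) (m : ℕ) : List ℕ := (List.range m).map (fun i => w i + 1)

/-- The one-line word (with 1-based values) of a permutation in `S_n`. -/
def wordOf {n : ℕ} (z : Equiv.Perm (Fin n)) : List ℕ := wordFn (permFn z) n

/-- The 1-based action of a permutation: `act y j = y(j)` in 1-based notation. -/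
def act {n : ℕ} (y : Equiv.Perm (Fin n)) (j : ℕ) : ℕ := permFn y (j - 1) + 1

/-- The 1-based pairs `(a, b)` with `a ≤ b = z(a)` of an involution,
listed in increasing order of `b`. -/
def invPairsFn (w : ℕ → ℕ) (m : ℕ) : List (ℕ × ℕ) :=
  ((List.range m).filter (fun b => decide (w b ≤ b))).map (fun b => (w b + 1, b + 1))

/-- Row Beissinger correspondence applied to an involution given as a function on `[0, m)`. -/
def PrBSfn (w : ℕ → ℕ) (m : ℕ) : List (List ℕ) :=
  (invPairsFn w m).foldl (fun T p => rBS T p.1 p.2) []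

/-- Column Beissinger correspondence applied to an involution given as a function on `[0, m)`. -/
def PcBSfn (w : ℕ → ℕ) (m : ℕ) : List (List ℕ) :=
  (invPairsFn w m).foldl (fun T p => cBS T p.1 p.2) []

/-- The row Beissinger tableau of an involution in `S_n`. -/
def PrBS {n : ℕ} (z : Equiv.Perm (Fin n)) : List (List ℕ) := PrBSfn (permFn z) n

/-- The column Beissinger tableau of an involution in `S_n`. -/
def PcBS {n : ℕ} (z : Equiv.Perm (Fin n)) : List (List ℕ) := PcBSfn (permFn z) n

/-- The transpose of a tableau. -/
def transposeT (T : List (List ℕ)) : List (List ℕ) :=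
  (List.range (T.headD []).length).map (fun c => T.filterMap (fun r => r[c]?))

/-- The length of (0-indexed) column `c`. -/
def colLen (T : List (List ℕ)) (c : ℕ) : ℕ := (T.filter (fun r => decide (c < r.length))).length

/-- The number of columns of odd length. -/
def oddColCount (T : List (List ℕ)) : ℕ :=
  ((List.range (T.headD []).length).filter (fun c => decide (colLen T c % 2 = 1))).length

/-- The number of rows of odd length. -/
def oddRowCount (T : List (List ℕ)) : ℕ :=
  (T.filter (fun r => decide (r.length % 2 = 1))).length

/-- Apply a function to every entry of a tableau. -/
def applyEntries (f : ℕ → ℕ) (T : List (List ℕ)) : List (List ℕ) := T.map (List.map f)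

/-- The transposition of values `j` and `j+1`. -/
def swapVals (j : ℕ) : ℕ → ℕ := fun x => if x = j then j + 1 else if x = j + 1 then j else x

/-- The elementary dual equivalence operator `D_i` acting on a tableau
containing the entries `i-1`, `i`, `i+1`, defined via the row reading word. -/
def Dop (i : ℕ) (T : List (List ℕ)) : List (List ℕ) :=
  let w := rowWord T
  let p : ℕ → ℕ := fun v => w.idxOf v
  if (p i < p (i+1) ∧ p (i+1) < p (i-1)) ∨ (p (i-1) < p (i+1) ∧ p (i+1) < p i) then
    applyEntries (swapVals (i-1)) T
  else if (p i < p (i-1) ∧ p (i-1) < p (i+1)) ∨ (p (i+1) < p (i-1) ∧ p (i-1) < p i) then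
    applyEntries (swapVals i) T
  else T

/-- `x` lies strictly between `u` and `v`. -/
def Btwn {α : Type*} [LT α] (x u v : α) : Prop := (u < x ∧ x < v) ∨ (v < x ∧ x < u)

/-- Exchange the entries at 0-based positions `p` and `q` of a word. -/
def swapPos (u : List ℕ) (p q : ℕ) : List ℕ := (u.set p (u.getD q 0)).set q (u.getD p 0)

/-- The Knuth move relation at 1-based position `i` on words: either the word is
unchanged and the letters at positions `i-1, i, i+1` are monotone, or the letters at
positions `i-1, i` are exchanged (when the letter at position `i+1` is between them),
or the letters at positions `i, i+1` are exchanged (when the letter at position `i-1`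
is between them). -/
def KnuthRelW (i : ℕ) (u v : List ℕ) : Prop :=
  (v = u ∧ ((u.getD (i-2) 0 < u.getD (i-1) 0 ∧ u.getD (i-1) 0 < u.getD i 0) ∨
            (u.getD i 0 < u.getD (i-1) 0 ∧ u.getD (i-1) 0 < u.getD (i-2) 0))) ∨
  (Btwn (u.getD i 0) (u.getD (i-2) 0) (u.getD (i-1) 0) ∧ v = swapPos u (i-2) (i-1)) ∨
  (Btwn (u.getD (i-2) 0) (u.getD (i-1) 0) (u.getD i 0) ∧ v = swapPos u (i-1) i)

/-- The Knuth move relation at position `i` on permutations. -/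
def KnuthRel {n : ℕ} (i : ℕ) (v w : Equiv.Perm (Fin n)) : Prop :=
  KnuthRelW i (wordOf v) (wordOf w)

/-- The dual Knuth move relation at position `i` on permutations. -/
def DualKnuthRel {n : ℕ} (i : ℕ) (v w : Equiv.Perm (Fin n)) : Prop :=
  KnuthRelW i (wordOf v⁻¹) (wordOf w⁻¹)

/-- Knuth equivalence of permutations. -/
def KnuthEquiv {n : ℕ} (v w : Equiv.Perm (Fin n)) : Prop :=
  Relation.ReflTransGen (fun a b => ∃ i, 1 < i ∧ i < n ∧ KnuthRel i a b) v w

/-- Dual Knuth equivalence of permutations. -/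
def DualKnuthEquiv {n : ℕ} (v w : Equiv.Perm (Fin n)) : Prop :=
  Relation.ReflTransGen (fun a b => ∃ i, 1 < i ∧ i < n ∧ DualKnuthRel i a b) v w

/-- The 0-based fixed points of a permutation, in increasing order. -/
def fixList {n : ℕ} (z : Equiv.Perm (Fin n)) : List ℕ :=
  ((List.finRange n).filter (fun c => decide (z c = c))).map Fin.val

/-- The ascending embedding `ι_asc` of involutions of `[n]` into fixed-point-free
involutions of `[2n]`, as a function on 0-based indices. -/
def iotaAsc {n : ℕ} (z : Equiv.Perm (Fin n)) : ℕ → ℕ := fun i =>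
  let F := fixList z
  if h : i < n then
    if z ⟨i, h⟩ = ⟨i, h⟩ then n + F.idxOf i else (z ⟨i, h⟩ : ℕ)
  else if i < n + F.length then F.getD (i - n) 0
  else if i % 2 = 0 then i + 1 else i - 1

/-- The descending embedding `ι_des` of involutions of `[n]` into fixed-point-free
involutions of `[2n]`, as a function on 0-based indices. -/
def iotaDes {n : ℕ} (z : Equiv.Perm (Fin n)) : ℕ → ℕ := fun i =>
  let F := fixList z
  if h : i < n then
    if z ⟨i, h⟩ = ⟨i, h⟩ then n + F.length - 1 - F.idxOf i else (z ⟨i, h⟩ : ℕ)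
  else if i < n + F.length then F.getD (n + F.length - 1 - i) 0
  else if i % 2 = 0 then i + 1 else i - 1

/-- The number of inversions of a function on `[0, m)`. -/
def lenFn (w : ℕ → ℕ) (m : ℕ) : ℕ :=
  ((Finset.range m ×ˢ Finset.range m).filter (fun p => p.1 < p.2 ∧ w p.2 < w p.1)).card

/-- Weak descents (0-based indices `i` with `0 ≤ i < n-1`). -/
def wDesEq (w : ℕ → ℕ) (n : ℕ) : Finset ℕ :=
  (Finset.range (n-1)).filter (fun i => w i = i + 1 ∧ w (i+1) = i)

/-- Weak ascents. -/
def wAscEq (w : ℕ → ℕ) (n : ℕ) : Finset ℕ :=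
  (Finset.range (n-1)).filter (fun i => n ≤ w i ∧ n ≤ w (i+1))

/-- Strict descents. -/
def wDesLt (w : ℕ → ℕ) (n : ℕ) : Finset ℕ :=
  ((Finset.range (n-1)).filter (fun i => w (i+1) < w i)) \ (wAscEq w n ∪ wDesEq w n)

/-- Strict ascents. -/
def wAscLt (w : ℕ → ℕ) (n : ℕ) : Finset ℕ :=
  ((Finset.range (n-1)).filter (fun i => w i < w (i+1))) \ wAscEq w n

/-- Delete all boxes of `T` whose entry exceeds `n`. -/
def restrictT (T : List (List ℕ)) (n : ℕ) : List (List ℕ) :=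
  (T.map (fun r => r.filter (fun x => decide (x ≤ n)))).filter (fun r => !r.isEmpty)

/-- The 0-based indices of the odd columns of `T`, in increasing order. -/
def oddColsList (T : List (List ℕ)) : List ℕ :=
  (List.range (T.headD []).length).filter (fun c => decide (colLen T c % 2 = 1))

/-- Given a standard tableau `T` with `n` boxes and `k` odd columns, place
`n+1, …, n+k` at the bottoms of the odd columns from left to right, then add
`n+k+1, n+k+3, …, 2n-1` to the first row and `n+k+2, n+k+4, …, 2n` to the second row. -/
def iotaRow (n : ℕ) (T : List (List ℕ)) : List (List ℕ) :=
  let cols := oddColsList T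
  let k := cols.length
  let T1 := ((List.range cols.length).zip cols).foldl (fun S ci => addAtCol S ci.2 (n + 1 + ci.1)) T
  let T2 := (List.range ((n - k) / 2)).foldl (fun S m => addAtRow S 0 (n + k + 1 + 2*m)) T1
  (List.range ((n - k) / 2)).foldl (fun S m => addAtRow S 1 (n + k + 2 + 2*m)) T2

/-- The number of transfer points: 0-based `i < n` with `w i ≥ n` (1-based `w(i) > n`). -/
def transferCount (w : ℕ → ℕ) (n : ℕ) : ℕ :=
  ((List.range n).filter (fun i => decide (n ≤ w i))).length

/-- `G^asc_n`: the image of the ascending embedding. -/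
def GAsc (n : ℕ) : Set (ℕ → ℕ) := {f | ∃ w : Equiv.Perm (Fin n), w * w = 1 ∧ f = iotaAsc w}

/-- `G^des_n`: the image of the descending embedding. -/
def GDes (n : ℕ) : Set (ℕ → ℕ) := {f | ∃ w : Equiv.Perm (Fin n), w * w = 1 ∧ f = iotaDes w}

/-- The value `e(j)` from the statement of Theorem on column Beissinger dual
equivalence: for 1-based `j`, `e(j) = -j` if `y(j) = j`; `e(j) = j` if
`j ≠ y(j) ∈ {i-1, i, i+1}`; and `e(j) = y(j)` otherwise. -/
def eVal {n : ℕ} (y : Equiv.Perm (Fin n)) (i j : ℕ) : ℤ :=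
  if act y j = j then -(j : ℤ)
  else if act y j ∈ ({i-1, i, i+1} : Finset ℕ) then (j : ℤ)
  else (act y j : ℤ)

/-- Schensted column insertion, via the transpose. -/
def colInsertT (T : List (List ℕ)) (x : ℕ) : List (List ℕ) :=
  transposeT (rsInsert (transposeT T) x)

/-- The (0-indexed) row in which Schensted column insertion of `x` adds a box. -/
def colBumpRow (T : List (List ℕ)) (x : ℕ) : ℕ := rsBumpCol (transposeT T) x

/-- The alternative column Beissinger insertion `T ⇐cBS (a,b)`: if `a = b`, add `a`
at the end of the first row; if `a < b`, column insert `a` (adding a box in row `i`)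
and add `b` at the end of row `i+1`. -/
def cBSalt (T : List (List ℕ)) (a b : ℕ) : List (List ℕ) :=
  if a = b then addAtRow T 0 a
  else addAtRow (colInsertT T a) (colBumpRow T a + 1) b

/-!
Write `k` for the number of fixed points of `z`, `C` for the set of fixed points, and
`B = [n, n + k)` (0-based). Let `ρ` reverse the block `B` and fix everything else. Since
`n - k` is even, `ι_des(z) = ρ ∘ ι_asc(z) ∘ ρ`. Moreover `ι_asc(z)` maps `C` increasingly onto
`B` and `B` increasingly onto `C`, and `ρ` keeps the relative order of every pair of
positions not both in `B`. Hence `(i, j) ↦ (ρ i, ρ j)` matches the inversions of `ι_asc(z)`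
with those of `ι_des(z)`, except for the pairs inside `B` or inside `C`: none of them is an
inversion of `ι_asc(z)`, all of them are inversions of `ι_des(z)`, and there are
`2 · (k choose 2) = k (k - 1)` of them.
-/

open Finset

theorem _root_.List.SortedLT.getD_lt_getD {α : Type*} [LinearOrder α] {l : List α}
    (hl : l.SortedLT) (d : α) {i j : ℕ} (hij : i < j) (hj : j < l.length) :
    l.getD i d < l.getD j d := by
  rw [List.getD_eq_getElem _ _ (hij.trans hj), List.getD_eq_getElem _ _ hj]
  exact hl.getElem_lt_getElem_iff.mpr hij

theorem _root_.List.SortedLT.idxOf_lt_idxOf {α : Type*} [LinearOrder α] {l : List α}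
    (hl : l.SortedLT) {x y : α} (hx : x ∈ l) (hy : y ∈ l) (hxy : x < y) :
    l.idxOf x < l.idxOf y := by
  rw [← hl.getElem_lt_getElem_iff (hi := List.idxOf_lt_length_iff.mpr hx)
    (hj := List.idxOf_lt_length_iff.mpr hy), List.getElem_idxOf, List.getElem_idxOf]
  exact hxy

def blockRev (a k i : ℕ) : ℕ := if a ≤ i ∧ i < a + k then 2 * a + k - 1 - i else i

section BlockRev

variable {a k i j : ℕ}

@[simp]
lemma blockRev_blockRev (i : ℕ) : blockRev a k (blockRev a k i) = i := by
  unfold blockRev; split_ifs <;> omega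

lemma blockRev_of_notMem (h : i ∉ Ico a (a + k)) : blockRev a k i = i := by
  rw [mem_Ico] at h; simp [blockRev, h]

lemma blockRev_mem_Ico_iff : blockRev a k i ∈ Ico a (a + k) ↔ i ∈ Ico a (a + k) := by
  simp only [mem_Ico, blockRev]; split_ifs <;> omega

lemma blockRev_mem_iff_of_disjoint {C : Finset ℕ} (hdisj : Disjoint (Ico a (a + k)) C) :
    blockRev a k i ∈ C ↔ i ∈ C := by
  by_cases hi : i ∈ Ico a (a + k)
  · exact iff_of_false (disjoint_left.mp hdisj (blockRev_mem_Ico_iff.mpr hi))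
      (disjoint_left.mp hdisj hi)
  · rw [blockRev_of_notMem hi]

lemma blockRev_lt {m : ℕ} (hm : a + k ≤ m) (hi : i < m) : blockRev a k i < m := by
  unfold blockRev; split_ifs <;> omega

lemma blockRev_lt_blockRev_iff (h : ¬(i ∈ Ico a (a + k) ∧ j ∈ Ico a (a + k))) :
    blockRev a k i < blockRev a k j ↔ i < j := by
  simp only [mem_Ico] at h; unfold blockRev; split_ifs <;> omega

lemma blockRev_lt_blockRev_of_mem (hi : i ∈ Ico a (a + k)) (hj : j ∈ Ico a (a + k))
    (hij : i < j) : blockRev a k j < blockRev a k i := by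
  simp only [mem_Ico] at hi hj; unfold blockRev; split_ifs <;> omega

end BlockRev

def inversions (w : ℕ → ℕ) (m : ℕ) : Finset (ℕ × ℕ) :=
  {p ∈ range m ×ˢ range m | p.1 < p.2 ∧ w p.2 < w p.1}

lemma lenFn_eq_card_inversions (w : ℕ → ℕ) (m : ℕ) : lenFn w m = #(inversions w m) := rfl

lemma mem_inversions {w : ℕ → ℕ} {m i j : ℕ} :
    (i, j) ∈ inversions w m ↔ j < m ∧ i < j ∧ w j < w i := by
  simp only [inversions, mem_filter, mem_product, mem_range]
  constructor
  · rintro ⟨⟨-, h⟩, h'⟩; exact ⟨h, h'⟩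
  · rintro ⟨h, h₁, h₂⟩; exact ⟨⟨by omega, h⟩, h₁, h₂⟩

def ltPairs (S : Finset ℕ) : Finset (ℕ × ℕ) := {p ∈ S ×ˢ S | p.1 < p.2}

lemma mem_ltPairs {S : Finset ℕ} {i j : ℕ} : (i, j) ∈ ltPairs S ↔ i < j ∧ i ∈ S ∧ j ∈ S := by
  simp only [ltPairs, mem_filter, mem_product]
  tauto

lemma card_ltPairs (S : Finset ℕ) : #(ltPairs S) = (#S).choose 2 := card_product_filter_lt

section BlockRevConj

variable {f : ℕ → ℕ} {m a k : ℕ} {C : Finset ℕ}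

lemma blockRev_conj_lt_iff (hm : a + k ≤ m) (hC : ∀ i, i ∈ C ↔ i < m ∧ f i ∈ Ico a (a + k))
    (hdisj : Disjoint (Ico a (a + k)) C) {i j : ℕ} (hi : i < m) (hj : j < m)
    (hij : ¬(i ∈ C ∧ j ∈ C)) :
    (blockRev a k ∘ f ∘ blockRev a k) j < (blockRev a k ∘ f ∘ blockRev a k) i ↔
      f (blockRev a k j) < f (blockRev a k i) := by
  refine blockRev_lt_blockRev_iff fun ⟨hfj, hfi⟩ => hij ⟨?_, ?_⟩
  · rw [← blockRev_mem_iff_of_disjoint hdisj]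
    exact (hC _).mpr ⟨blockRev_lt hm hi, hfi⟩
  · rw [← blockRev_mem_iff_of_disjoint hdisj]
    exact (hC _).mpr ⟨blockRev_lt hm hj, hfj⟩

lemma ltPairs_Ico_subset_inversions_blockRev_conj (hm : a + k ≤ m)
    (hC : ∀ i, i ∈ C ↔ i < m ∧ f i ∈ Ico a (a + k)) (hdisj : Disjoint (Ico a (a + k)) C)
    (hf : StrictMonoOn f (Ico a (a + k))) :
    ltPairs (Ico a (a + k)) ⊆ inversions (blockRev a k ∘ f ∘ blockRev a k) m := by
  rintro ⟨i, j⟩ hp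
  obtain ⟨hij, hi, hj⟩ := mem_ltPairs.mp hp
  have hfix : ∀ x ∈ Ico a (a + k), blockRev a k (f x) = f x := fun x hx =>
    blockRev_of_notMem fun h => disjoint_left.mp hdisj hx
      ((hC x).mpr ⟨by rw [mem_Ico] at hx; omega, h⟩)
  have hri := blockRev_mem_Ico_iff.mpr hi
  have hrj := blockRev_mem_Ico_iff.mpr hj
  refine mem_inversions.mpr ⟨by rw [mem_Ico] at hj; omega, hij, ?_⟩
  simp only [Function.comp_apply, hfix _ hri, hfix _ hrj]
  exact hf hrj hri (blockRev_lt_blockRev_of_mem hi hj hij)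

lemma ltPairs_subset_inversions_blockRev_conj (hC : ∀ i, i ∈ C ↔ i < m ∧ f i ∈ Ico a (a + k))
    (hdisj : Disjoint (Ico a (a + k)) C) (hf : StrictMonoOn f C) :
    ltPairs C ⊆ inversions (blockRev a k ∘ f ∘ blockRev a k) m := by
  rintro ⟨i, j⟩ hp
  obtain ⟨hij, hi, hj⟩ := mem_ltPairs.mp hp
  have hfix : ∀ x ∈ C, blockRev a k x = x := fun x hx =>
    blockRev_of_notMem (disjoint_right.mp hdisj hx)
  refine mem_inversions.mpr ⟨((hC j).mp hj).1, hij, ?_⟩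
  simp only [Function.comp_apply, hfix _ hi, hfix _ hj]
  exact blockRev_lt_blockRev_of_mem ((hC i).mp hi).2 ((hC j).mp hj).2 (hf hi hj hij)

lemma card_inversions_blockRev_conj_sdiff (hm : a + k ≤ m)
    (hC : ∀ i, i ∈ C ↔ i < m ∧ f i ∈ Ico a (a + k)) (hdisj : Disjoint (Ico a (a + k)) C)
    (hfB : StrictMonoOn f (Ico a (a + k))) (hfC : StrictMonoOn f C) :
    #(inversions (blockRev a k ∘ f ∘ blockRev a k) m \ (ltPairs (Ico a (a + k)) ∪ ltPairs C)) =
      #(inversions f m) := by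
  have hU : ∀ {i j}, (i, j) ∈ ltPairs (Ico a (a + k)) ∪ ltPairs C ↔
      i < j ∧ (i ∈ Ico a (a + k) ∧ j ∈ Ico a (a + k) ∨ i ∈ C ∧ j ∈ C) := by
    intro i j
    rw [mem_union, mem_ltPairs, mem_ltPairs]
    tauto
  apply card_nbij' (fun p => (blockRev a k p.1, blockRev a k p.2))
    (fun p => (blockRev a k p.1, blockRev a k p.2))
  · rintro ⟨i, j⟩ hp
    obtain ⟨hp, hpU⟩ := mem_sdiff.mp hp
    obtain ⟨hj, hij, hinv⟩ := mem_inversions.mp hp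
    have hB : ¬(i ∈ Ico a (a + k) ∧ j ∈ Ico a (a + k)) := fun h => hpU (hU.mpr ⟨hij, .inl h⟩)
    have hC' : ¬(i ∈ C ∧ j ∈ C) := fun h => hpU (hU.mpr ⟨hij, .inr h⟩)
    exact mem_inversions.mpr ⟨blockRev_lt hm hj, (blockRev_lt_blockRev_iff hB).mpr hij,
      (blockRev_conj_lt_iff hm hC hdisj (by omega) hj hC').mp hinv⟩
  · rintro ⟨i, j⟩ hp
    obtain ⟨hj, hij, hinv⟩ := mem_inversions.mp hp
    have hB : ¬(i ∈ Ico a (a + k) ∧ j ∈ Ico a (a + k)) := fun h => (hfB h.1 h.2 hij).not_gt hinv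
    have hC' : ¬(i ∈ C ∧ j ∈ C) := fun h => (hfC h.1 h.2 hij).not_gt hinv
    have hrB : ¬(blockRev a k i ∈ Ico a (a + k) ∧ blockRev a k j ∈ Ico a (a + k)) := by
      rwa [blockRev_mem_Ico_iff, blockRev_mem_Ico_iff]
    have hrC : ¬(blockRev a k i ∈ C ∧ blockRev a k j ∈ C) := by
      rwa [blockRev_mem_iff_of_disjoint hdisj, blockRev_mem_iff_of_disjoint hdisj]
    refine mem_sdiff.mpr ⟨mem_inversions.mpr ⟨blockRev_lt hm hj,
      (blockRev_lt_blockRev_iff hB).mpr hij, ?_⟩, fun h => (hU.mp h).2.elim hrB hrC⟩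
    rw [blockRev_conj_lt_iff hm hC hdisj (blockRev_lt hm (by omega)) (blockRev_lt hm hj) hrC]
    simpa using hinv
  · intro p _; simp
  · intro p _; simp

theorem lenFn_blockRev_conj (hm : a + k ≤ m) (hC : ∀ i, i ∈ C ↔ i < m ∧ f i ∈ Ico a (a + k))
    (hdisj : Disjoint (Ico a (a + k)) C) (hfB : StrictMonoOn f (Ico a (a + k)))
    (hfC : StrictMonoOn f C) :
    lenFn (blockRev a k ∘ f ∘ blockRev a k) m = lenFn f m + k.choose 2 + (#C).choose 2 := by
  have hU := union_subset (ltPairs_Ico_subset_inversions_blockRev_conj hm hC hdisj hfB)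
    (ltPairs_subset_inversions_blockRev_conj hC hdisj hfC)
  have hdisjU : Disjoint (ltPairs (Ico a (a + k))) (ltPairs C) :=
    disjoint_filter_filter (disjoint_product.mpr (.inl hdisj))
  rw [lenFn_eq_card_inversions, lenFn_eq_card_inversions, ← card_sdiff_add_card_eq_card hU,
    card_inversions_blockRev_conj_sdiff hm hC hdisj hfB hfC, card_union_of_disjoint hdisjU,
    card_ltPairs, card_ltPairs, Nat.card_Ico, Nat.add_sub_cancel_left, add_assoc]

end BlockRevConj

section FixList

variable {n : ℕ} (z : Equiv.Perm (Fin n))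

lemma mem_fixList {c : ℕ} : c ∈ fixList z ↔ ∃ h : c < n, z ⟨c, h⟩ = ⟨c, h⟩ := by
  simp only [fixList, List.mem_map, List.mem_filter, List.mem_finRange, decide_eq_true_eq,
    true_and]
  constructor
  · rintro ⟨a, ha, rfl⟩; exact ⟨a.2, ha⟩
  · rintro ⟨h, hc⟩; exact ⟨⟨c, h⟩, hc, rfl⟩

lemma lt_of_mem_fixList {c : ℕ} (h : c ∈ fixList z) : c < n := ((mem_fixList z).mp h).1

lemma sortedLT_fixList : (fixList z).SortedLT := by
  rw [List.sortedLT_iff_pairwise, fixList, List.pairwise_map]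
  exact ((List.sortedLT_finRange n).pairwise).filter _

lemma length_fixList : (fixList z).length = #z.supportᶜ := by
  have : z.supportᶜ = univ.filter (fun c => z c = c) := by ext; simp
  rw [this, fixList, List.length_map]
  rfl

lemma length_fixList_le : (fixList z).length ≤ n :=
  length_fixList z ▸ (card_le_univ _).trans (Fintype.card_fin n).le

lemma even_add_length_fixList (hz : z * z = 1) : Even (n + (fixList z).length) := by
  have h := Equiv.Perm.card_compl_support_modEq (p := 2) (n := 1) (σ := z) (by rwa [pow_one, sq])
  rw [Fintype.card_fin, ← length_fixList] at h
  rw [Nat.even_add, Nat.even_iff, Nat.even_iff, h]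

lemma getD_fixList_lt {i : ℕ} (hi : i < (fixList z).length) : (fixList z).getD i 0 < n :=
  lt_of_mem_fixList z (List.getD_eq_getElem _ _ hi ▸ List.getElem_mem hi)

end FixList

section Values

variable {n : ℕ} (z : Equiv.Perm (Fin n)) {x : ℕ}

lemma iotaAsc_of_mem_fixList (hx : x ∈ fixList z) : iotaAsc z x = n + (fixList z).idxOf x := by
  obtain ⟨h, hfix⟩ := (mem_fixList z).mp hx
  simp only [iotaAsc, dif_pos h, if_pos hfix]

lemma iotaDes_of_mem_fixList (hx : x ∈ fixList z) :
    iotaDes z x = n + (fixList z).length - 1 - (fixList z).idxOf x := by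
  obtain ⟨h, hfix⟩ := (mem_fixList z).mp hx
  simp only [iotaDes, dif_pos h, if_pos hfix]

lemma iotaAsc_of_notMem_fixList (h : x < n) (hx : x ∉ fixList z) : iotaAsc z x = z ⟨x, h⟩ := by
  have hfix : z ⟨x, h⟩ ≠ ⟨x, h⟩ := fun hfix => hx ((mem_fixList z).mpr ⟨h, hfix⟩)
  simp only [iotaAsc, dif_pos h, if_neg hfix]

lemma iotaDes_of_notMem_fixList (h : x < n) (hx : x ∉ fixList z) : iotaDes z x = z ⟨x, h⟩ := by
  have hfix : z ⟨x, h⟩ ≠ ⟨x, h⟩ := fun hfix => hx ((mem_fixList z).mpr ⟨h, hfix⟩)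
  simp only [iotaDes, dif_pos h, if_neg hfix]

lemma iotaAsc_of_mem_Ico (hx : x ∈ Ico n (n + (fixList z).length)) :
    iotaAsc z x = (fixList z).getD (x - n) 0 := by
  rw [mem_Ico] at hx
  simp only [iotaAsc, dif_neg (not_lt.mpr hx.1), if_pos hx.2]

lemma iotaDes_of_mem_Ico (hx : x ∈ Ico n (n + (fixList z).length)) :
    iotaDes z x = (fixList z).getD (n + (fixList z).length - 1 - x) 0 := by
  rw [mem_Ico] at hx
  simp only [iotaDes, dif_neg (not_lt.mpr hx.1), if_pos hx.2]

lemma iotaAsc_of_add_length_le (hx : n + (fixList z).length ≤ x) :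
    iotaAsc z x = if x % 2 = 0 then x + 1 else x - 1 := by
  simp only [iotaAsc, dif_neg (show ¬x < n by omega), if_neg (not_lt.mpr hx)]

lemma iotaDes_of_add_length_le (hx : n + (fixList z).length ≤ x) :
    iotaDes z x = if x % 2 = 0 then x + 1 else x - 1 := by
  simp only [iotaDes, dif_neg (show ¬x < n by omega), if_neg (not_lt.mpr hx)]

lemma strictMonoOn_iotaAsc_Ico :
    StrictMonoOn (iotaAsc z) (Ico n (n + (fixList z).length)) := by
  intro x hx y hy hxy
  rw [iotaAsc_of_mem_Ico z hx, iotaAsc_of_mem_Ico z hy]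
  rw [coe_Ico, Set.mem_Ico] at hx hy
  exact (sortedLT_fixList z).getD_lt_getD 0 (by omega) (by omega)

lemma strictMonoOn_iotaAsc_fixList :
    StrictMonoOn (iotaAsc z) (fixList z).toFinset := by
  intro x hx y hy hxy
  rw [List.coe_toFinset] at hx hy
  rw [iotaAsc_of_mem_fixList z hx, iotaAsc_of_mem_fixList z hy]
  exact Nat.add_lt_add_left ((sortedLT_fixList z).idxOf_lt_idxOf hx hy hxy) n

end Values

section Involution

variable {n : ℕ} {z : Equiv.Perm (Fin n)}

lemma le_iotaAsc_of_add_length_le (hz : z * z = 1) {x : ℕ} (hx : n + (fixList z).length ≤ x) :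
    n + (fixList z).length ≤ iotaAsc z x := by
  obtain ⟨c, hc⟩ := even_add_length_fixList z hz
  rw [iotaAsc_of_add_length_le z hx]
  split_ifs <;> omega

lemma mem_fixList_iff_iotaAsc_mem_Ico (hz : z * z = 1) (x : ℕ) :
    x ∈ fixList z ↔ x < 2 * n ∧ iotaAsc z x ∈ Ico n (n + (fixList z).length) := by
  have hk := length_fixList_le z
  rw [mem_Ico]
  constructor
  · intro hx
    have := List.idxOf_lt_length_iff.mpr hx
    have := lt_of_mem_fixList z hx
    rw [iotaAsc_of_mem_fixList z hx]
    omega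
  · rintro ⟨-, hlo, hhi⟩
    by_contra hx
    rcases lt_or_ge x n with h | h
    · rw [iotaAsc_of_notMem_fixList z h hx] at hlo
      exact (z ⟨x, h⟩).isLt.not_ge hlo
    rcases lt_or_ge x (n + (fixList z).length) with h' | h'
    · rw [iotaAsc_of_mem_Ico z (mem_Ico.mpr ⟨h, h'⟩)] at hlo
      exact (getD_fixList_lt z (by omega)).not_ge hlo
    · exact (le_iotaAsc_of_add_length_le hz h').not_gt hhi

lemma iotaDes_eq_blockRev_conj (hz : z * z = 1) :
    iotaDes z = blockRev n (fixList z).length ∘ iotaAsc z ∘ blockRev n (fixList z).length := by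
  set k := (fixList z).length
  funext x
  simp only [Function.comp_apply]
  rcases lt_or_ge x n with h | h
  · have hrx : blockRev n k x = x := blockRev_of_notMem (by simp [h])
    by_cases hx : x ∈ fixList z
    · have := List.idxOf_lt_length_iff.mpr hx
      rw [hrx, iotaAsc_of_mem_fixList z hx, iotaDes_of_mem_fixList z hx, blockRev,
        if_pos (by omega)]
      omega
    · rw [hrx, iotaAsc_of_notMem_fixList z h hx, iotaDes_of_notMem_fixList z h hx,
        blockRev_of_notMem (by simp)]
  rcases lt_or_ge x (n + k) with h' | h'
  · have hx : x ∈ Ico n (n + k) := mem_Ico.mpr ⟨h, h'⟩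
    have hrx : blockRev n k x = 2 * n + k - 1 - x := if_pos ⟨h, h'⟩
    rw [iotaDes_of_mem_Ico z hx, hrx, iotaAsc_of_mem_Ico z (hrx ▸ blockRev_mem_Ico_iff.mpr hx),
      show 2 * n + k - 1 - x - n = n + k - 1 - x by omega]
    exact (blockRev_of_notMem fun hm =>
      (getD_fixList_lt z (show n + k - 1 - x < k by omega)).not_ge (mem_Ico.mp hm).1).symm
  · have hrx : blockRev n k x = x := blockRev_of_notMem (by simp [h'])
    rw [hrx, iotaDes_of_add_length_le z h', ← iotaAsc_of_add_length_le z h']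
    exact (blockRev_of_notMem fun hm =>
      (le_iotaAsc_of_add_length_le hz h').not_gt (mem_Ico.mp hm).2).symm

end Involution

/-- `ℓ(ι_des(z)) = ℓ(ι_asc(z)) + k(k-1)` for an involution `z`
with `k` fixed points. -/
theorem iotaDes_length (n k : ℕ) (z : Equiv.Perm (Fin n)) (hz : z * z = 1)
    (hk : (fixList z).length = k) :
    lenFn (iotaDes z) (2 * n) = lenFn (iotaAsc z) (2 * n) + k * (k - 1) := by
  subst hk
  have hdisj : Disjoint (Ico n (n + (fixList z).length)) (fixList z).toFinset :=
    disjoint_right.mpr fun x hx hx' =>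
      (lt_of_mem_fixList z (List.mem_toFinset.mp hx)).not_ge (mem_Ico.mp hx').1
  rw [iotaDes_eq_blockRev_conj hz,
    lenFn_blockRev_conj (by have := length_fixList_le z; omega)
      (fun x => List.mem_toFinset.trans (mem_fixList_iff_iotaAsc_mem_Ico hz x)) hdisj
      (strictMonoOn_iotaAsc_Ico z) (strictMonoOn_iotaAsc_fixList z),
    List.toFinset_card_of_nodup (sortedLT_fixList z).nodup, add_assoc, ← two_mul,
    Nat.choose_two_right, Nat.mul_div_cancel' (Nat.even_mul_pred_self _).two_dvd]

end GelfandRSK
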